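/- Given a network G with duplication forest Γ, the complementarity number δ(θ) = Σ_i δ(v_i) is the same for every duplicate sequence θ compatible with Γ, where δ(v_i) indicates whether duplicate v_i is adjacent to its anchor u_i in G_i^θ. -/

import Mathlib

/-!
Call an internal node of the forest *complementary* (for a graph `H`) if some edge of `H` joins
a leaf below its left child to a leaf below its right child. The number of complementary nodes
is an invariant of the forest alone, and a merge step `R_v^u` trades it in exactly for `δ(v)`:
the cherry `{u, v}` disappears and was complementary iff `u ~ v`, while contracting `v` into `u`
does not change which other nodes are complementary, since `u` and `v` always lie below the same
children. Hence every compatible sequence ending in a seed forest has `δ(θ)` equal to the number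
of complementary nodes of `Γ` for `G`.
-/

open scoped Classical

universe u

variable {V : Type u}

/-- The merge (backward) operator `R_v^u(G)`: contract duplicate `v` into anchor `u`.
Vertex `v` becomes isolated (representing its removal from the vertex set). -/
def mergeG (G : SimpleGraph V) (u v : V) : SimpleGraph V where
  Adj x y := x ≠ y ∧ x ≠ v ∧ y ≠ v ∧
    (G.Adj x y ∨ (x = u ∧ G.Adj v y) ∨ (y = u ∧ G.Adj v x))
  symm := by
    refine ⟨?_⟩
    rintro x y ⟨h1, h2, h3, h4⟩
    refine ⟨h1.symm, h3, h2, ?_⟩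
    rcases h4 with h | ⟨a, b⟩ | ⟨a, b⟩
    · exact Or.inl h.symm
    · exact Or.inr (Or.inr ⟨a, b⟩)
    · exact Or.inr (Or.inl ⟨a, b⟩)
  loopless := by refine ⟨?_⟩; rintro x ⟨h, _⟩; exact h rfl

/-- δ(v): 1 if the duplicate `v` is adjacent to its anchor `u`. -/
noncomputable def deltaI (G : SimpleGraph V) (u v : V) : ℕ :=
  if G.Adj u v then 1 else 0

/-- e(v): number of common neighbours of anchor `u` and duplicate `v`. -/
noncomputable def extI [Fintype V] (G : SimpleGraph V) (u v : V) : ℕ :=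
  (G.neighborFinset u ∩ G.neighborFinset v).card

/-- ℓ(v): number of vertices (other than `u`, `v`) adjacent to exactly one of `u`, `v`. -/
noncomputable def lossI [Fintype V] (G : SimpleGraph V) (u v : V) : ℕ :=
  (((G.neighborFinset u ∪ G.neighborFinset v) \
      (G.neighborFinset u ∩ G.neighborFinset v)) \ {u, v}).card

/-- Apply the merge operators backward along a list of (anchor, duplicate) pairs. -/
noncomputable def graphAfter (G : SimpleGraph V) (steps : List (V × V)) : SimpleGraph V :=
  steps.foldl (fun g p => mergeG g p.1 p.2) G

noncomputable def deltaNum : SimpleGraph V → List (V × V) → ℕ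
  | _, [] => 0
  | G, s :: rest => deltaI G s.1 s.2 + deltaNum (mergeG G s.1 s.2) rest

noncomputable def extNum [Fintype V] : SimpleGraph V → List (V × V) → ℕ
  | _, [] => 0
  | G, s :: rest => extI G s.1 s.2 + extNum (mergeG G s.1 s.2) rest

noncomputable def lossNum [Fintype V] : SimpleGraph V → List (V × V) → ℕ
  | _, [] => 0
  | G, s :: rest => lossI G s.1 s.2 + lossNum (mergeG G s.1 s.2) rest

/-- The likelihood of a (backward) history: product of one-step DMC transition
probabilities `p_c^{δ_i} p^{e_i} q^{ℓ_i}` with `q = (1-p)/2`. -/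
noncomputable def likelihood [Fintype V] (pc p : ℝ) : SimpleGraph V → List (V × V) → ℝ
  | _, [] => 1
  | G, s :: rest =>
      pc ^ deltaI G s.1 s.2 * p ^ extI G s.1 s.2 * ((1 - p) / 2) ^ lossI G s.1 s.2 *
        likelihood pc p (mergeG G s.1 s.2) rest

/-- Rooted binary trees. -/
inductive BTree (V : Type u) : Type u
  | leaf : V → BTree V
  | node : BTree V → BTree V → BTree V

def BTree.leaves : BTree V → List V
  | .leaf v => [v]
  | .node l r => l.leaves ++ r.leaves

/-- A duplication forest: a list of rooted binary trees. -/
abbrev Forest (V : Type u) := List (BTree V)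

def Forest.leaves (Γ : Forest V) : List V := Γ.flatMap BTree.leaves

/-- Replace the cherry `{u, v}` of a tree by the single leaf `u`. -/
inductive ReplaceCherry : BTree V → V → V → BTree V → Prop
  | base_left (u v : V) : ReplaceCherry (.node (.leaf u) (.leaf v)) u v (.leaf u)
  | base_right (u v : V) : ReplaceCherry (.node (.leaf v) (.leaf u)) u v (.leaf u)
  | left {l l' r : BTree V} {u v : V} :
      ReplaceCherry l u v l' → ReplaceCherry (.node l r) u v (.node l' r)
  | right {l r r' : BTree V} {u v : V} :
      ReplaceCherry r u v r' → ReplaceCherry (.node l r) u v (.node l r')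

/-- One backward step on a duplication forest: replace the cherry `{u,v}` in one tree. -/
inductive ForestStep : Forest V → V → V → Forest V → Prop
  | head {t t' : BTree V} {ts : Forest V} {u v : V} :
      ReplaceCherry t u v t' → ForestStep (t :: ts) u v (t' :: ts)
  | tail {t : BTree V} {ts ts' : Forest V} {u v : V} :
      ForestStep ts u v ts' → ForestStep (t :: ts) u v (t :: ts')

/-- `FUnfold Γ steps Γ₀`: the (anchor, duplicate) list `steps`, processed backward in time,
is compatible with the duplication forest `Γ` and reduces it to `Γ₀`. -/
inductive FUnfold : Forest V → List (V × V) → Forest V → Prop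
  | nil (Γ : Forest V) : FUnfold Γ [] Γ
  | cons {Γ Γ' Γ₀ : Forest V} {u v : V} {steps : List (V × V)} :
      ForestStep Γ u v Γ' → FUnfold Γ' steps Γ₀ → FUnfold Γ ((u, v) :: steps) Γ₀

/-- A forest consisting only of isolated leaves (duplication forest of a seed graph). -/
def IsSeed (Γ : Forest V) : Prop := ∀ t ∈ Γ, ∃ v, t = BTree.leaf v

def HasEdgeBetween (H : SimpleGraph V) (A B : List V) : Prop :=
  ∃ a ∈ A, ∃ b ∈ B, H.Adj a b

noncomputable def BTree.complementaryCount (H : SimpleGraph V) : BTree V → ℕ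
  | .leaf _ => 0
  | .node l r => (if HasEdgeBetween H l.leaves r.leaves then 1 else 0) +
      l.complementaryCount H + r.complementaryCount H

noncomputable def Forest.complementaryCount (H : SimpleGraph V) (Γ : Forest V) : ℕ :=
  (Γ.map (BTree.complementaryCount H)).sum

@[simp]
theorem Forest.leaves_cons (t : BTree V) (ts : Forest V) :
    Forest.leaves (t :: ts) = t.leaves ++ Forest.leaves ts :=
  rfl

theorem hasEdgeBetween_comm {H : SimpleGraph V} {A B : List V} :
    HasEdgeBetween H A B ↔ HasEdgeBetween H B A := by
  constructor <;> rintro ⟨a, ha, b, hb, h⟩ <;> exact ⟨b, hb, a, ha, h.symm⟩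

theorem hasEdgeBetween_congr {H H' : SimpleGraph V} {A B : List V}
    (h : ∀ x ∈ A, ∀ y ∈ B, (H.Adj x y ↔ H'.Adj x y)) :
    HasEdgeBetween H A B ↔ HasEdgeBetween H' A B := by
  constructor <;> rintro ⟨a, ha, b, hb, hab⟩
  · exact ⟨a, ha, b, hb, (h a ha b hb).1 hab⟩
  · exact ⟨a, ha, b, hb, (h a ha b hb).2 hab⟩

theorem mergeG_adj_of_ne {H : SimpleGraph V} {u v x y : V}
    (hxu : x ≠ u) (hxv : x ≠ v) (hyu : y ≠ u) (hyv : y ≠ v) :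
    (mergeG H u v).Adj x y ↔ H.Adj x y := by
  constructor
  · rintro ⟨-, -, -, h | ⟨rfl, -⟩ | ⟨rfl, -⟩⟩
    · exact h
    · exact absurd rfl hxu
    · exact absurd rfl hyu
  · exact fun h => ⟨H.ne_of_adj h, hxv, hyv, Or.inl h⟩

theorem hasEdgeBetween_mergeG_erase_left {H : SimpleGraph V} {u v : V} {A B : List V}
    (hA : A.Nodup) (hu : u ∈ A) (hv : v ∈ A) (huv : u ≠ v) (hB : ∀ b ∈ B, b ≠ u ∧ b ≠ v) :
    HasEdgeBetween (mergeG H u v) (A.erase v) B ↔ HasEdgeBetween H A B := by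
  constructor
  · rintro ⟨a, ha, b, hb, -, -, -, hab | ⟨rfl, hvb⟩ | ⟨rfl, -⟩⟩
    · exact ⟨a, (hA.mem_erase_iff.1 ha).2, b, hb, hab⟩
    · exact ⟨v, hv, b, hb, hvb⟩
    · exact absurd rfl (hB b hb).1
  · rintro ⟨a, ha, b, hb, hab⟩
    obtain ⟨hbu, hbv⟩ := hB b hb
    by_cases hav : a = v
    · subst hav
      exact ⟨u, hA.mem_erase_iff.2 ⟨huv, hu⟩, b, hb, Ne.symm hbu, huv, hbv,
        Or.inr (Or.inl ⟨rfl, hab⟩)⟩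
    · exact ⟨a, hA.mem_erase_iff.2 ⟨hav, ha⟩, b, hb, H.ne_of_adj hab, hav, hbv, Or.inl hab⟩

theorem hasEdgeBetween_mergeG_erase_right {H : SimpleGraph V} {u v : V} {A B : List V}
    (hB : B.Nodup) (hu : u ∈ B) (hv : v ∈ B) (huv : u ≠ v) (hA : ∀ a ∈ A, a ≠ u ∧ a ≠ v) :
    HasEdgeBetween (mergeG H u v) A (B.erase v) ↔ HasEdgeBetween H A B := by
  rw [hasEdgeBetween_comm, hasEdgeBetween_mergeG_erase_left hB hu hv huv hA,
    hasEdgeBetween_comm]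

theorem BTree.complementaryCount_congr {H H' : SimpleGraph V} {t : BTree V}
    (h : ∀ x ∈ t.leaves, ∀ y ∈ t.leaves, (H.Adj x y ↔ H'.Adj x y)) :
    t.complementaryCount H = t.complementaryCount H' := by
  induction t with
  | leaf => rfl
  | node l r ihl ihr =>
    have hl : ∀ x ∈ l.leaves, x ∈ (BTree.node l r).leaves := fun x hx => by
      simp [BTree.leaves, hx]
    have hr : ∀ x ∈ r.leaves, x ∈ (BTree.node l r).leaves := fun x hx => by
      simp [BTree.leaves, hx]
    simp only [BTree.complementaryCount]
    rw [ihl fun x hx y hy => h x (hl x hx) y (hl y hy),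
      ihr fun x hx y hy => h x (hr x hx) y (hr y hy),
      hasEdgeBetween_congr fun x hx y hy => h x (hl x hx) y (hr y hy)]

theorem BTree.complementaryCount_mergeG {H : SimpleGraph V} {u v : V} {t : BTree V}
    (h : ∀ x ∈ t.leaves, x ≠ u ∧ x ≠ v) :
    t.complementaryCount (mergeG H u v) = t.complementaryCount H :=
  BTree.complementaryCount_congr fun x hx y hy =>
    mergeG_adj_of_ne (h x hx).1 (h x hx).2 (h y hy).1 (h y hy).2

theorem ReplaceCherry.mem_leaves {t t' : BTree V} {u v : V} (h : ReplaceCherry t u v t') :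
    u ∈ t.leaves ∧ v ∈ t.leaves := by
  induction h with
  | base_left | base_right => simp [BTree.leaves]
  | left _ ih | right _ ih => simp [BTree.leaves, ih.1, ih.2]

theorem ReplaceCherry.ne {t t' : BTree V} {u v : V} (hnd : t.leaves.Nodup)
    (h : ReplaceCherry t u v t') : u ≠ v := by
  induction h with
  | base_left => simpa [BTree.leaves] using hnd
  | base_right => simpa [BTree.leaves, eq_comm] using hnd
  | left _ ih => exact ih (List.nodup_append.1 hnd).1
  | right _ ih => exact ih (List.nodup_append.1 hnd).2.1

theorem ReplaceCherry.leaves_eq_erase {t t' : BTree V} {u v : V} (hnd : t.leaves.Nodup)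
    (h : ReplaceCherry t u v t') : t'.leaves = t.leaves.erase v := by
  induction h with
  | base_left u v =>
    simp [BTree.leaves, (ReplaceCherry.base_left u v).ne hnd]
  | base_right => simp [BTree.leaves]
  | left h ih =>
    simp only [BTree.leaves, ih (List.nodup_append.1 hnd).1,
      List.erase_append_left _ h.mem_leaves.2]
  | right h ih =>
    obtain ⟨-, hnr, hdisj⟩ := List.nodup_append.1 hnd
    have hvl := fun hc => hdisj _ hc _ h.mem_leaves.2 rfl
    simp only [BTree.leaves, ih hnr, List.erase_append_right _ hvl]

theorem ReplaceCherry.complementaryCount_eq {H : SimpleGraph V} {t t' : BTree V} {u v : V}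
    (hnd : t.leaves.Nodup) (h : ReplaceCherry t u v t') :
    t.complementaryCount H = deltaI H u v + t'.complementaryCount (mergeG H u v) := by
  induction h generalizing H with
  | base_left =>
    simp [BTree.complementaryCount, BTree.leaves, HasEdgeBetween, deltaI]
  | base_right =>
    simp [BTree.complementaryCount, BTree.leaves, HasEdgeBetween, deltaI,
      SimpleGraph.adj_comm]
  | left h ih =>
    obtain ⟨hnl, -, hdisj⟩ := List.nodup_append.1 hnd
    obtain ⟨hu, hv⟩ := h.mem_leaves
    have hr : ∀ b ∈ _, b ≠ _ ∧ b ≠ _ :=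
      fun b hb => ⟨fun e => hdisj _ hu b hb e.symm, fun e => hdisj _ hv b hb e.symm⟩
    simp only [BTree.complementaryCount, h.leaves_eq_erase hnl,
      hasEdgeBetween_mergeG_erase_left hnl hu hv (h.ne hnl) hr,
      BTree.complementaryCount_mergeG hr, ih hnl]
    omega
  | right h ih =>
    obtain ⟨-, hnr, hdisj⟩ := List.nodup_append.1 hnd
    obtain ⟨hu, hv⟩ := h.mem_leaves
    have hl : ∀ a ∈ _, a ≠ _ ∧ a ≠ _ :=
      fun a ha => ⟨fun e => hdisj a ha _ hu e, fun e => hdisj a ha _ hv e⟩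
    simp only [BTree.complementaryCount, h.leaves_eq_erase hnr,
      hasEdgeBetween_mergeG_erase_right hnr hu hv (h.ne hnr) hl,
      BTree.complementaryCount_mergeG hl, ih hnr]
    omega

theorem ForestStep.mem_leaves {Γ Γ' : Forest V} {u v : V} (h : ForestStep Γ u v Γ') :
    u ∈ Forest.leaves Γ ∧ v ∈ Forest.leaves Γ := by
  induction h with
  | head h => simp [h.mem_leaves.1, h.mem_leaves.2]
  | tail _ ih => simp [ih.1, ih.2]

theorem ForestStep.leaves_eq_erase {Γ Γ' : Forest V} {u v : V} (hnd : (Forest.leaves Γ).Nodup)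
    (h : ForestStep Γ u v Γ') : Forest.leaves Γ' = (Forest.leaves Γ).erase v := by
  induction h with
  | head h =>
    rw [Forest.leaves_cons] at hnd
    simp only [Forest.leaves_cons, h.leaves_eq_erase (List.nodup_append.1 hnd).1,
      List.erase_append_left _ h.mem_leaves.2]
  | tail h ih =>
    rw [Forest.leaves_cons] at hnd
    obtain ⟨-, hnts, hdisj⟩ := List.nodup_append.1 hnd
    have hvt := fun hc => hdisj _ hc _ h.mem_leaves.2 rfl
    simp only [Forest.leaves_cons, ih hnts, List.erase_append_right _ hvt]

theorem ForestStep.complementaryCount_eq {H : SimpleGraph V} {Γ Γ' : Forest V} {u v : V}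
    (hnd : (Forest.leaves Γ).Nodup) (h : ForestStep Γ u v Γ') :
    Γ.complementaryCount H = deltaI H u v + Γ'.complementaryCount (mergeG H u v) := by
  induction h generalizing H with
  | @head t _ ts _ _ h =>
    rw [Forest.leaves_cons] at hnd
    obtain ⟨hnt, -, hdisj⟩ := List.nodup_append.1 hnd
    obtain ⟨hu, hv⟩ := h.mem_leaves
    have hts : ∀ s ∈ ts, s.complementaryCount (mergeG H _ _) = s.complementaryCount H :=
      fun s hs => BTree.complementaryCount_mergeG fun x hx => by
        have hx' : x ∈ Forest.leaves ts := List.mem_flatMap.2 ⟨s, hs, hx⟩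
        exact ⟨fun e => hdisj _ hu x hx' e.symm, fun e => hdisj _ hv x hx' e.symm⟩
    simp only [Forest.complementaryCount, List.map_cons, List.sum_cons,
      h.complementaryCount_eq hnt, List.map_congr_left hts]
    omega
  | @tail t _ _ _ _ h ih =>
    rw [Forest.leaves_cons] at hnd
    obtain ⟨-, hnts, hdisj⟩ := List.nodup_append.1 hnd
    obtain ⟨hu, hv⟩ := h.mem_leaves
    have ht : t.complementaryCount (mergeG H _ _) = t.complementaryCount H :=
      BTree.complementaryCount_mergeG fun x hx =>
        ⟨fun e => hdisj x hx _ hu e, fun e => hdisj x hx _ hv e⟩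
    simp only [Forest.complementaryCount, List.map_cons, List.sum_cons, ht] at ih ⊢
    rw [ih hnts]
    omega

theorem IsSeed.complementaryCount_eq_zero {H : SimpleGraph V} {Γ : Forest V} (h : IsSeed Γ) :
    Γ.complementaryCount H = 0 :=
  List.sum_eq_zero fun n hn => by
    obtain ⟨t, ht, rfl⟩ := List.mem_map.1 hn
    obtain ⟨w, rfl⟩ := h t ht
    rfl

theorem FUnfold.deltaNum_eq_complementaryCount {H : SimpleGraph V} {Γ Γ₀ : Forest V}
    {s : List (V × V)} (h : FUnfold Γ s Γ₀) (hnd : (Forest.leaves Γ).Nodup)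
    (hseed : IsSeed Γ₀) : deltaNum H s = Γ.complementaryCount H := by
  induction h generalizing H with
  | nil => exact hseed.complementaryCount_eq_zero.symm
  | cons hstep _ ih =>
    have hnd' := hstep.leaves_eq_erase hnd ▸ hnd.erase _
    rw [deltaNum, ih hnd' hseed, hstep.complementaryCount_eq hnd]

theorem stmt6_general (G : SimpleGraph V) (Γ : Forest V)
    (hnd : (Forest.leaves Γ).Nodup)
    (s₁ s₂ : List (V × V)) (Γ₁ Γ₂ : Forest V)
    (h₁ : FUnfold Γ s₁ Γ₁) (hseed₁ : IsSeed Γ₁)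
    (h₂ : FUnfold Γ s₂ Γ₂) (hseed₂ : IsSeed Γ₂) :
    deltaNum G s₁ = deltaNum G s₂ := by
  rw [h₁.deltaNum_eq_complementaryCount hnd hseed₁, h₂.deltaNum_eq_complementaryCount hnd hseed₂]

/-- the complementarity number `δ(θ)` is the same for every duplicate
sequence compatible with the duplication forest `Γ` of the network `G`. -/
theorem stmt6 [Fintype V] (G : SimpleGraph V) (Γ : Forest V)
    (hnd : (Forest.leaves Γ).Nodup) (hall : ∀ x : V, x ∈ Forest.leaves Γ)
    (s₁ s₂ : List (V × V)) (Γ₁ Γ₂ : Forest V)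
    (h₁ : FUnfold Γ s₁ Γ₁) (hseed₁ : IsSeed Γ₁)
    (h₂ : FUnfold Γ s₂ Γ₂) (hseed₂ : IsSeed Γ₂) :
    deltaNum G s₁ = deltaNum G s₂ :=
  stmt6_general G Γ hnd s₁ s₂ Γ₁ Γ₂ h₁ hseed₁ h₂ hseed₂
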